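/- arXiv:1907.09247 — 3 statements merged into one kernel-verified Lean document; each statement's English description precedes it below -/
import Mathlib

section
/- Let S and S' be any two semantics (maps assigning to each program a collection of total belief views, called its world views) that both satisfy the epistemic splitting property and the supra-ASP property, and let Π be an epistemically stratified program over a finite set of atoms At. Then exactly one of the following holds: (i) Π has no S-world view and no S'-world view, or (ii) Π has exactly one S-world view and exactly one S'-world view, and they are equal. -/
namespace Epist

attribute [local instance] Classical.propDecidable

/-- Epistemic formulas over a set (type) of atoms `α`. -/
inductive EForm (α : Type) : Type where
  | bot : EForm α
  | atom : α → EForm α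
  | and : EForm α → EForm α → EForm α
  | or : EForm α → EForm α → EForm α
  | imp : EForm α → EForm α → EForm α
  | K : EForm α → EForm α

variable {α : Type}

/-- ¬φ abbreviates φ → ⊥. -/
def EForm.neg (φ : EForm α) : EForm α := .imp φ .bot

/-- ⊤ abbreviates ¬⊥. -/
def EForm.top : EForm α := EForm.neg .bot

/-- Atoms occurring in a formula. -/
def EForm.atoms : EForm α → Set α
  | .bot => ∅
  | .atom a => {a}
  | .and φ ψ => φ.atoms ∪ ψ.atoms
  | .or φ ψ => φ.atoms ∪ ψ.atoms
  | .imp φ ψ => φ.atoms ∪ ψ.atoms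
  | .K φ => φ.atoms

/-- A belief view: a set of HT-interpretations ⟨H,T⟩ (as pairs of sets of atoms). -/
abbrev BView (α : Type) := Set (Set α × Set α)

/-- W^t : the total belief view {⟨T,T⟩ : ⟨H,T⟩ ∈ W}. -/
def tview (W : BView α) : BView α := (fun i => (i.2, i.2)) '' W

/-- Wellformedness of a belief view: nonempty and H ⊆ T for all members. -/
def isBView (W : BView α) : Prop := W.Nonempty ∧ ∀ i ∈ W, i.1 ⊆ i.2

/-- A belief view is total when all its HT-interpretations are total. -/
def totalView (W : BView α) : Prop := ∀ i ∈ W, i.1 = i.2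

/-- Satisfaction of an epistemic formula by a belief interpretation ⟨W,H,T⟩. -/
def sat : EForm α → BView α → Set α → Set α → Prop
  | .bot, _, _, _ => False
  | .atom a, _, H, _ => a ∈ H
  | .and φ ψ, W, H, T => sat φ W H T ∧ sat ψ W H T
  | .or φ ψ, W, H, T => sat φ W H T ∨ sat ψ W H T
  | .imp φ ψ, W, H, T =>
      (sat φ W H T → sat ψ W H T) ∧ (sat φ (tview W) T T → sat ψ (tview W) T T)
  | .K φ, W, _, _ => ∀ i ∈ W, sat φ W i.1 i.2

/-- ⟨W,H',T'⟩ ⊨ φ for all ⟨H',T'⟩ ∈ W. -/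
def epSat (W : BView α) (φ : EForm α) : Prop := ∀ i ∈ W, sat φ W i.1 i.2

/-- W is an epistemic model of the theory Γ. -/
def epModel (W : BView α) (Γ : Set (EForm α)) : Prop :=
  isBView W ∧ ∀ φ ∈ Γ, epSat W φ

/-- ⟨W,H,T⟩ is a belief model of the theory Γ. -/
def beliefModel (W : BView α) (H T : Set α) (Γ : Set (EForm α)) : Prop :=
  isBView W ∧ H ⊆ T ∧ (∀ φ ∈ Γ, sat φ W H T) ∧ ∀ φ ∈ Γ, epSat W φ

/-- Order ⪯ on belief interpretations: ⟨W',H',T'⟩ ⪯ ⟨W,H,T⟩. -/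
def biLE (W' : BView α) (H' T' : Set α) (W : BView α) (H T : Set α) : Prop :=
  (T' = T ∧ H' ⊆ H) ∧
  (∀ i ∈ W, ∃ H₁, (H₁, i.2) ∈ W' ∧ H₁ ⊆ i.1) ∧
  (∀ i ∈ W', ∃ H₁, (H₁, i.2) ∈ W ∧ i.1 ⊆ H₁)

/-- Strict order ≺ on belief interpretations. -/
def biLT (W' : BView α) (H' T' : Set α) (W : BView α) (H T : Set α) : Prop :=
  biLE W' H' T' W H T ∧ (W', H', T') ≠ (W, H, T)

/-- Order ⪯ on belief views. -/
def viewLE (W₁ W₂ : BView α) : Prop :=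
  (∀ i ∈ W₂, ∃ H₁, (H₁, i.2) ∈ W₁ ∧ H₁ ⊆ i.1) ∧
  (∀ i ∈ W₁, ∃ H₂, (H₂, i.2) ∈ W₂ ∧ i.1 ⊆ H₂)

/-- Strict order ≺ on belief views. -/
def viewLT (W₁ W₂ : BView α) : Prop := viewLE W₁ W₂ ∧ W₁ ≠ W₂

/-- ⟨W,T⟩ is an equilibrium belief model of Γ. -/
def eqBeliefModel (Γ : Set (EForm α)) (W : BView α) (T : Set α) : Prop :=
  totalView W ∧ beliefModel W T T Γ ∧
  ∀ W' H' T', beliefModel W' H' T' Γ → ¬ biLT W' H' T' W T T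

/-- ⟨W,T⟩ is a weak equilibrium belief model of Γ: no belief-total (i.e. with total
view) belief model of Γ is ≺-smaller. -/
def weakEqBeliefModel (Γ : Set (EForm α)) (W : BView α) (T : Set α) : Prop :=
  totalView W ∧ beliefModel W T T Γ ∧
  ∀ W' H' T', totalView W' → beliefModel W' H' T' Γ → ¬ biLT W' H' T' W T T

/-- Identification of a set of propositional interpretations with a total belief view. -/
def ofSets (S : Set (Set α)) : BView α := (fun T => (T, T)) '' S

/-- W is a FAEEL-world view of Γ iff W = { T : ⟨W,T⟩ is an equilibrium belief model }. -/
def FAEEL (Γ : Set (EForm α)) (W : BView α) : Prop :=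
  isBView W ∧ totalView W ∧ W = ofSets {T | eqBeliefModel Γ W T}

/-- W is a weak autoepistemic world view of Γ. -/
def weakAEWorldView (Γ : Set (EForm α)) (W : BView α) : Prop :=
  isBView W ∧ totalView W ∧ W = ofSets {T | weakEqBeliefModel Γ W T}

/-- W is a FEEL-world view of Γ. -/
def FEEL (Γ : Set (EForm α)) (W : BView α) : Prop :=
  totalView W ∧ epModel W Γ ∧ ∀ W', epModel W' Γ → ¬ viewLT W' W

/-- A belief view is simple iff ⟨H,T⟩,⟨H',T⟩ ∈ W imply H = H'. -/
def simpleView (W : BView α) : Prop := ∀ i ∈ W, ∀ j ∈ W, i.2 = j.2 → i.1 = j.1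

/-- W is an EEL-world view of Γ. -/
def EEL (Γ : Set (EForm α)) (W : BView α) : Prop :=
  totalView W ∧ epModel W Γ ∧
  ¬ ∃ W', simpleView W' ∧ epModel W' Γ ∧ tview W' = W ∧ ∃ i ∈ W', i.1 ⊂ i.2

/-- Ordinary here-and-there satisfaction (for objective, i.e. K-free, formulas). -/
def htSat (φ : EForm α) (H T : Set α) : Prop := sat φ (∅ : BView α) H T

/-- T is a stable model of the (objective) theory Δ. -/
def stableModel (Δ : Set (EForm α)) (T : Set α) : Prop :=
  (∀ φ ∈ Δ, htSat φ T T) ∧ ∀ H, H ⊂ T → ¬ ∀ φ ∈ Δ, htSat φ H T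

/-- SM[Δ] : the set of stable models of Δ. -/
def SMset (Δ : Set (EForm α)) : Set (Set α) := {T | stableModel Δ T}

/-- Subjective reduct of a formula w.r.t. a belief view W and a signature U:
each maximal subformula Kφ with Atoms(φ) ⊆ U is replaced by ⊤ if W ⊨ Kφ
and by ⊥ otherwise. -/
noncomputable def reduct (W : BView α) (U : Set α) : EForm α → EForm α
  | .bot => .bot
  | .atom a => .atom a
  | .and φ ψ => .and (reduct W U φ) (reduct W U ψ)
  | .or φ ψ => .or (reduct W U φ) (reduct W U ψ)
  | .imp φ ψ => .imp (reduct W U φ) (reduct W U ψ)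
  | .K φ =>
      if φ.atoms ⊆ U then (if epSat W (.K φ) then EForm.top else .bot)
      else .K (reduct W U φ)

/-- W is a G91-world view of Γ iff W = SM[Γ^W]. -/
def G91 (Γ : Set (EForm α)) (W : BView α) : Prop :=
  isBView W ∧ totalView W ∧ W = ofSets (SMset (reduct W Set.univ '' Γ))

/-- Negatively subjective reduct: each maximal subformula ¬Kφ is replaced
by ⊤ if W ⊭ Kφ and by ⊥ otherwise. -/
noncomputable def negReduct (W : BView α) : EForm α → EForm α
  | .bot => .bot
  | .atom a => .atom a
  | .and φ ψ => .and (negReduct W φ) (negReduct W ψ)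
  | .or φ ψ => .or (negReduct W φ) (negReduct W ψ)
  | .imp (.K φ) .bot => if epSat W (.K φ) then .bot else EForm.top
  | .imp φ ψ => .imp (negReduct W φ) (negReduct W ψ)
  | .K φ => .K (negReduct W φ)

/-- Atom, ⊤ or ⊥. -/
def isAtomBase (φ : EForm α) : Prop := (∃ a, φ = .atom a) ∨ φ = EForm.top ∨ φ = .bot

/-- Objective literals: l, ¬l or ¬¬l for l an atom, ⊤ or ⊥. -/
def isObjLit (φ : EForm α) : Prop :=
  isAtomBase φ ∨ (∃ ψ, isAtomBase ψ ∧ φ = EForm.neg ψ) ∨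
    (∃ ψ, isAtomBase ψ ∧ φ = EForm.neg (EForm.neg ψ))

/-- Subjective literals: Kl, ¬Kl or ¬¬Kl for l an objective literal. -/
def isSubjLit (φ : EForm α) : Prop :=
  (∃ l, isObjLit l ∧ φ = .K l) ∨ (∃ l, isObjLit l ∧ φ = EForm.neg (.K l)) ∨
    (∃ l, isObjLit l ∧ φ = EForm.neg (EForm.neg (.K l)))

/-- Positive subjective literals: Kl. -/
def isPosSubjLit (φ : EForm α) : Prop := ∃ l, isObjLit l ∧ φ = .K l

/-- A rule: a head disjunction of atoms and a body list of literals. -/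
structure ERule (α : Type) where
  head : List α
  body : List (EForm α)

/-- Wellformedness of a rule: every body member is an (objective or subjective) literal. -/
def ERule.wf (r : ERule α) : Prop := ∀ φ ∈ r.body, isObjLit φ ∨ isSubjLit φ

/-- Disjunction of atoms (⊥ when empty). -/
def disjForm : List α → EForm α
  | [] => .bot
  | a :: l => .or (.atom a) (disjForm l)

/-- Conjunction of formulas (⊤ when empty). -/
def conjForm : List (EForm α) → EForm α
  | [] => EForm.top
  | φ :: l => .and φ (conjForm l)

/-- The formula Head(r) ← Body(r) corresponding to a rule. -/
def ERule.form (r : ERule α) : EForm α := .imp (conjForm r.body) (disjForm r.head)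

/-- Atoms of Head(r). -/
def ERule.headAtoms (r : ERule α) : Set α := {a | a ∈ r.head}

/-- Atoms of Body_obj(r). -/
def ERule.objBodyAtoms (r : ERule α) : Set α := {a | ∃ φ ∈ r.body, isObjLit φ ∧ a ∈ φ.atoms}

/-- Atoms of Body_sub(r). -/
def ERule.subjBodyAtoms (r : ERule α) : Set α := {a | ∃ φ ∈ r.body, isSubjLit φ ∧ a ∈ φ.atoms}

/-- Atoms of Body⁺_sub(r). -/
def ERule.posSubjBodyAtoms (r : ERule α) : Set α :=
  {a | ∃ φ ∈ r.body, isPosSubjLit φ ∧ a ∈ φ.atoms}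

/-- Atoms(r). -/
def ERule.atoms (r : ERule α) : Set α := r.headAtoms ∪ {a | ∃ φ ∈ r.body, a ∈ φ.atoms}

/-- A rule is objective if all its body literals are objective. -/
def ERule.objective (r : ERule α) : Prop := ∀ φ ∈ r.body, isObjLit φ

/-- A program is a set of rules. -/
abbrev EProgram (α : Type) := Set (ERule α)

def progWF (P : EProgram α) : Prop := ∀ r ∈ P, r.wf

/-- The theory consisting of the formulas of the rules of a program. -/
def progTheory (P : EProgram α) : Set (EForm α) := ERule.form '' P

def progAtoms (P : EProgram α) : Set α := {a | ∃ r ∈ P, a ∈ r.atoms}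

def progObjective (P : EProgram α) : Prop := ∀ r ∈ P, r.objective

/-- U is an epistemic splitting set of P. -/
def splittingSet (P : EProgram α) (U : Set α) : Prop :=
  ∀ r ∈ P, r.atoms ⊆ U ∨ (r.objBodyAtoms ∪ r.headAtoms) ∩ U = ∅

/-- ⟨B,Tp⟩ is a splitting of P w.r.t. U. -/
def isSplitting (P : EProgram α) (U : Set α) (B Tp : EProgram α) : Prop :=
  B ∩ Tp = ∅ ∧ B ∪ Tp = P ∧ (∀ r ∈ B, r.atoms ⊆ U) ∧
    ∀ r ∈ Tp, (r.objBodyAtoms ∪ r.headAtoms) ∩ U = ∅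

/-- Subjective reduct of a rule. -/
noncomputable def ruleReduct (W : BView α) (U : Set α) (r : ERule α) : ERule α :=
  ⟨r.head, r.body.map (reduct W U)⟩

/-- E_U(Π,W) := (T_U(Π))^W_U, here taking the top part Tp as argument. -/
noncomputable def EU (Tp : EProgram α) (W : BView α) (U : Set α) : EProgram α :=
  ruleReduct W U '' Tp

/-- W_b ⊔ W_t (for total belief views: pointwise unions). -/
def vjoin (W₁ W₂ : BView α) : BView α :=
  {i | ∃ j ∈ W₁, ∃ k ∈ W₂, i = (j.1 ∪ k.1, j.2 ∪ k.2)}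

/-- W|_U (for total belief views: pointwise intersection with U). -/
def vrestrict (W : BView α) (U : Set α) : BView α :=
  {i | ∃ j ∈ W, i = (j.1 ∩ U, j.2 ∩ U)}

/-- Epistemic dependence dep(a,b). -/
def dep (P : EProgram α) (a b : α) : Prop :=
  ∃ r ∈ P, a ∈ r.headAtoms ∪ r.objBodyAtoms ∧ b ∈ r.subjBodyAtoms

/-- Positive epistemic dependence dep⁺(a,b). -/
def depPos (P : EProgram α) (a b : α) : Prop :=
  ∃ r ∈ P, a ∈ r.headAtoms ∪ r.objBodyAtoms ∧ b ∈ r.posSubjBodyAtoms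

/-- P is epistemically stratified. -/
def stratified (P : EProgram α) : Prop :=
  ∃ lam : α → ℕ,
    (∀ r ∈ P, ∀ a ∈ r.atoms \ r.subjBodyAtoms, ∀ b ∈ r.atoms \ r.subjBodyAtoms,
      lam a = lam b) ∧
    ∀ a b, dep P a b → lam a > lam b

/-- P is epistemically tight. -/
def tight (P : EProgram α) : Prop :=
  ∃ lam : α → ℕ,
    (∀ r ∈ P, ∀ a ∈ r.atoms \ r.subjBodyAtoms, ∀ b ∈ r.atoms \ r.subjBodyAtoms,
      lam a = lam b) ∧
    ∀ a b, depPos P a b → lam a > lam b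

/-- A semantics S satisfies the epistemic splitting property. -/
def satisfiesSplitting (S : EProgram α → BView α → Prop) : Prop :=
  ∀ P : EProgram α, progWF P → ∀ U : Set α, splittingSet P U →
    ∀ B Tp : EProgram α, isSplitting P U B Tp →
      ∀ W : BView α,
        S P W ↔ ∃ Wb Wt, S B Wb ∧ S (EU Tp Wb U) Wt ∧ W = vjoin Wb Wt

/-- A semantics S satisfies supra-ASP. -/
def supraASP (S : EProgram α → BView α → Prop) : Prop :=
  ∀ P : EProgram α, progWF P → progObjective P →
    (SMset (progTheory P) ≠ ∅ ∧ ∀ W, (S P W ↔ W = ofSets (SMset (progTheory P)))) ∨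
    (SMset (progTheory P) = ∅ ∧ ∀ W, ¬ S P W)

end Epist

/-!
Induction on the number of atoms occurring in subjective literals. Let `k` be the least level
`λ b` of such an atom `b`. The objective rules all of whose atoms have level `≤ k` form the bottom
part `B` of a splitting at `U = {a | λ a ≤ k}`, since every other rule has its head and objective
body strictly above `k`. By supra-ASP, `SM[B]` is the only possible `W_b` for either semantics (and
there is none when `SM[B] = ∅`), so both semantics reduce `Π` to the same program
`E_U(Π \ B, SM[B])`, in which `b` no longer occurs subjectively.
-/

namespace Epist

variable {α : Type}

def EForm.Objective : EForm α → Prop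
  | .bot => True
  | .atom _ => True
  | .and φ ψ => φ.Objective ∧ ψ.Objective
  | .or φ ψ => φ.Objective ∧ ψ.Objective
  | .imp φ ψ => φ.Objective ∧ ψ.Objective
  | .K _ => False

section Literals

variable {φ l : EForm α} {W : BView α} {U : Set α}

theorem isAtomBase.objective (h : isAtomBase φ) : φ.Objective := by
  rcases h with ⟨a, rfl⟩ | rfl | rfl <;> simp [EForm.Objective, EForm.top, EForm.neg]

theorem isObjLit.objective (h : isObjLit φ) : φ.Objective := by
  rcases h with h | ⟨ψ, hψ, rfl⟩ | ⟨ψ, hψ, rfl⟩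
  · exact h.objective
  · exact ⟨hψ.objective, trivial⟩
  · exact ⟨⟨hψ.objective, trivial⟩, trivial⟩

theorem isSubjLit.not_objective (h : isSubjLit φ) : ¬ φ.Objective := by
  rcases h with ⟨l, -, rfl⟩ | ⟨l, -, rfl⟩ | ⟨l, -, rfl⟩ <;> simp [EForm.Objective, EForm.neg]

theorem isObjLit.not_isSubjLit (h : isObjLit φ) : ¬ isSubjLit φ :=
  fun hs => hs.not_objective h.objective

theorem isObjLit.atoms_subsingleton (h : isObjLit φ) : φ.atoms.Subsingleton := by
  rcases h with h | ⟨ψ, h, rfl⟩ | ⟨ψ, h, rfl⟩ <;>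
    rcases h with ⟨a, rfl⟩ | rfl | rfl <;> simp [EForm.atoms, EForm.top, EForm.neg]

theorem reduct_neg : reduct W U φ.neg = (reduct W U φ).neg := rfl

theorem isObjLit.reduct_eq (h : isObjLit φ) : reduct W U φ = φ := by
  rcases h with h | ⟨ψ, h, rfl⟩ | ⟨ψ, h, rfl⟩ <;>
    rcases h with ⟨a, rfl⟩ | rfl | rfl <;> rfl

theorem reduct_K_of_subset (hl : l.atoms ⊆ U) :
    reduct W U (.K l) = .top ∨ reduct W U (.K l) = .bot := by
  simp only [reduct, if_pos hl]
  split_ifs <;> simp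

theorem reduct_K_of_not_subset (hl : ¬ l.atoms ⊆ U) : reduct W U (.K l) = .K (reduct W U l) := by
  simp only [reduct, if_neg hl]

theorem isObjLit_and_atoms_eq_empty {ψ : EForm α} (hψ : ψ = .top ∨ ψ = .bot) :
    (isObjLit ψ ∧ ψ.atoms = ∅) ∧ (isObjLit ψ.neg ∧ ψ.neg.atoms = ∅) ∧
      (isObjLit ψ.neg.neg ∧ ψ.neg.neg.atoms = ∅) := by
  have hb : isAtomBase ψ := hψ.elim (fun h => Or.inr (Or.inl h)) (fun h => Or.inr (Or.inr h))
  have ha : ψ.atoms = ∅ := by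
    rcases hψ with rfl | rfl <;> simp [EForm.atoms, EForm.top, EForm.neg]
  exact ⟨⟨Or.inl hb, ha⟩, ⟨Or.inr (Or.inl ⟨ψ, hb, rfl⟩), by simp [EForm.neg, EForm.atoms, ha]⟩,
    ⟨Or.inr (Or.inr ⟨ψ, hb, rfl⟩), by simp [EForm.neg, EForm.atoms, ha]⟩⟩

theorem isSubjLit.reduct_cases (h : isSubjLit φ) :
    (isObjLit (reduct W U φ) ∧ (reduct W U φ).atoms = ∅) ∨
      (reduct W U φ = φ ∧ ∃ a, φ.atoms = {a} ∧ a ∉ U) := by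
  obtain ⟨l, hl, hφ⟩ : ∃ l, isObjLit l ∧
      (φ = .K l ∨ φ = (EForm.K l).neg ∨ φ = (EForm.K l).neg.neg) := by
    rcases h with ⟨l, hl, rfl⟩ | ⟨l, hl, rfl⟩ | ⟨l, hl, rfl⟩
    exacts [⟨l, hl, Or.inl rfl⟩, ⟨l, hl, Or.inr (Or.inl rfl)⟩, ⟨l, hl, Or.inr (Or.inr rfl)⟩]
  have hatoms : φ.atoms = l.atoms := by
    rcases hφ with rfl | rfl | rfl <;> simp [EForm.atoms, EForm.neg]
  by_cases hU : l.atoms ⊆ U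
  · left
    have key := isObjLit_and_atoms_eq_empty (reduct_K_of_subset (W := W) hU)
    rcases hφ with rfl | rfl | rfl
    exacts [key.1, key.2.1, key.2.2]
  · right
    have hK : reduct W U (.K l) = .K l := by rw [reduct_K_of_not_subset hU, hl.reduct_eq]
    refine ⟨by rcases hφ with rfl | rfl | rfl <;> simp only [reduct_neg, hK], ?_⟩
    rcases hl.atoms_subsingleton.eq_empty_or_singleton with he | ⟨a, ha⟩
    · exact absurd (he ▸ Set.empty_subset U) hU
    · exact ⟨a, hatoms.trans ha, fun haU => hU (ha ▸ Set.singleton_subset_iff.mpr haU)⟩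

end Literals

section RuleReduct

variable {W : BView α} {U : Set α} {r : ERule α}

theorem ERule.objBodyAtoms_subset_atoms : r.objBodyAtoms ⊆ r.atoms :=
  fun _ ⟨φ, hφ, _, ha⟩ => Or.inr ⟨φ, hφ, ha⟩

theorem ERule.subjBodyAtoms_eq_empty (h : r.objective) : r.subjBodyAtoms = ∅ :=
  Set.eq_empty_iff_forall_notMem.mpr fun _ ⟨φ, hφ, hs, _⟩ => (h φ hφ).not_isSubjLit hs

theorem ruleReduct_body_cases (hr : r.wf) {φ : EForm α} (hφ : φ ∈ (ruleReduct W U r).body) :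
    (φ ∈ r.body ∧ isObjLit φ) ∨ (φ ∈ r.body ∧ isSubjLit φ ∧ ∃ a, φ.atoms = {a} ∧ a ∉ U) ∨
      (isObjLit φ ∧ φ.atoms = ∅) := by
  obtain ⟨ψ, hψ, rfl⟩ := List.mem_map.mp hφ
  rcases hr ψ hψ with ho | hs
  · exact Or.inl (by rw [ho.reduct_eq]; exact ⟨hψ, ho⟩)
  · rcases hs.reduct_cases (W := W) (U := U) with h | ⟨he, h⟩
    · exact Or.inr (Or.inr h)
    · exact Or.inr (Or.inl (by rw [he]; exact ⟨hψ, hs, h⟩))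

theorem ruleReduct_wf (hr : r.wf) : (ruleReduct W U r).wf := by
  intro φ hφ
  rcases ruleReduct_body_cases hr hφ with ⟨-, h⟩ | ⟨-, h, -⟩ | ⟨h, -⟩
  exacts [Or.inl h, Or.inr h, Or.inl h]

theorem objBodyAtoms_ruleReduct_subset (hr : r.wf) :
    (ruleReduct W U r).objBodyAtoms ⊆ r.objBodyAtoms := by
  rintro a ⟨φ, hφ, hobj, ha⟩
  rcases ruleReduct_body_cases hr hφ with ⟨hφr, -⟩ | ⟨-, hs, -⟩ | ⟨-, he⟩
  · exact ⟨φ, hφr, hobj, ha⟩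
  · exact absurd hs hobj.not_isSubjLit
  · simp [he] at ha

theorem subjBodyAtoms_ruleReduct_subset (hr : r.wf) :
    (ruleReduct W U r).subjBodyAtoms ⊆ r.subjBodyAtoms \ U := by
  rintro a ⟨φ, hφ, hsubj, ha⟩
  rcases ruleReduct_body_cases hr hφ with ⟨-, ho⟩ | ⟨hφr, -, b, hb, hbU⟩ | ⟨ho, -⟩
  · exact absurd hsubj ho.not_isSubjLit
  · obtain rfl : a = b := by simpa [hb] using ha
    exact ⟨⟨φ, hφr, hsubj, ha⟩, hbU⟩
  · exact absurd hsubj ho.not_isSubjLit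

theorem atoms_ruleReduct_subset (hr : r.wf) :
    (ruleReduct W U r).atoms ⊆
      r.headAtoms ∪ r.objBodyAtoms ∪ (ruleReduct W U r).subjBodyAtoms := by
  rintro a (ha | ⟨φ, hφ, ha⟩)
  · exact Or.inl (Or.inl ha)
  rcases ruleReduct_body_cases hr hφ with ⟨hφr, ho⟩ | ⟨-, hs, -⟩ | ⟨-, he⟩
  · exact Or.inl (Or.inr ⟨φ, hφr, ho, ha⟩)
  · exact Or.inr ⟨φ, hφ, hs, ha⟩
  · simp [he] at ha

end RuleReduct

def subjAtoms (P : EProgram α) : Set α := {a | ∃ r ∈ P, a ∈ r.subjBodyAtoms}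

def SubjLitsHaveAtoms (P : EProgram α) : Prop :=
  ∀ r ∈ P, ∀ φ ∈ r.body, isSubjLit φ → φ.atoms.Nonempty

structure IsStratification (P : EProgram α) (lam : α → ℕ) : Prop where
  level_eq : ∀ r ∈ P, ∀ a ∈ r.atoms \ r.subjBodyAtoms, ∀ b ∈ r.atoms \ r.subjBodyAtoms,
    lam a = lam b
  lt_of_dep : ∀ a b, dep P a b → lam b < lam a

section Programs

variable {P Tp : EProgram α} {W : BView α} {U : Set α} {lam : α → ℕ}

theorem EU_wf (h : progWF Tp) : progWF (EU Tp W U) := by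
  rintro _ ⟨r, hr, rfl⟩
  exact ruleReduct_wf (h r hr)

theorem EU_subjLitsHaveAtoms (h : progWF Tp) : SubjLitsHaveAtoms (EU Tp W U) := by
  rintro _ ⟨r, hr, rfl⟩ φ hφ hs
  rcases ruleReduct_body_cases (h r hr) hφ with ⟨-, ho⟩ | ⟨-, -, a, ha, -⟩ | ⟨ho, -⟩
  · exact absurd hs ho.not_isSubjLit
  · exact ⟨a, ha ▸ rfl⟩
  · exact absurd hs ho.not_isSubjLit

theorem subjAtoms_EU_subset (h : progWF Tp) : subjAtoms (EU Tp W U) ⊆ subjAtoms Tp \ U := by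
  rintro a ⟨_, ⟨r, hr, rfl⟩, ha⟩
  obtain ⟨ha, haU⟩ := subjBodyAtoms_ruleReduct_subset (h r hr) ha
  exact ⟨⟨r, hr, ha⟩, haU⟩

theorem subjAtoms_mono (h : Tp ⊆ P) : subjAtoms Tp ⊆ subjAtoms P :=
  fun _ ⟨r, hr, ha⟩ => ⟨r, h hr, ha⟩

theorem IsStratification.not_mem_subjBodyAtoms (hlam : IsStratification P lam) {r : ERule α}
    (hr : r ∈ P) {a : α} (ha : a ∈ r.headAtoms ∪ r.objBodyAtoms) : a ∉ r.subjBodyAtoms :=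
  fun hs => lt_irrefl _ (hlam.lt_of_dep a a ⟨r, hr, ha, hs⟩)

theorem isStratification_EU (hlam : IsStratification P lam) (hwf : progWF P) (hTp : Tp ⊆ P) :
    IsStratification (EU Tp W U) lam := by
  constructor
  · rintro _ ⟨r, hr, rfl⟩ a ⟨ha, has⟩ b ⟨hb, hbs⟩
    have hrP := hTp hr
    have hlower : ∀ x ∈ (ruleReduct W U r).atoms, x ∉ (ruleReduct W U r).subjBodyAtoms →
        x ∈ r.atoms \ r.subjBodyAtoms := by
      intro x hx hxs
      rcases atoms_ruleReduct_subset (hwf r hrP) hx with (hh | ho) | hs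
      · exact ⟨Or.inl hh, hlam.not_mem_subjBodyAtoms hrP (Or.inl hh)⟩
      · exact ⟨ERule.objBodyAtoms_subset_atoms ho, hlam.not_mem_subjBodyAtoms hrP (Or.inr ho)⟩
      · exact absurd hs hxs
    exact hlam.level_eq r hrP a (hlower a ha has) b (hlower b hb hbs)
  · rintro a b ⟨_, ⟨r, hr, rfl⟩, ha, hb⟩
    have hrP := hTp hr
    refine hlam.lt_of_dep a b ⟨r, hrP, ?_, (subjBodyAtoms_ruleReduct_subset (hwf r hrP) hb).1⟩
    exact ha.imp id (fun ho => objBodyAtoms_ruleReduct_subset (hwf r hrP) ho)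

end Programs

def lowerRules (P : EProgram α) (lam : α → ℕ) (k : ℕ) : EProgram α :=
  {r ∈ P | r.objective ∧ r.atoms ⊆ {a | lam a ≤ k}}

section LevelSplit

variable {P : EProgram α} {lam : α → ℕ} {k : ℕ}

/-- A rule outside `lowerRules P lam k` has all its head and objective body
atoms above `k`: through a subjective literal by stratification,
otherwise because all its atoms share one level. -/
theorem IsStratification.lt_of_not_lower (hlam : IsStratification P lam) (hwf : progWF P)
    (hcl : SubjLitsHaveAtoms P) (hk : ∀ b ∈ subjAtoms P, k ≤ lam b) {r : ERule α} (hr : r ∈ P)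
    (hrk : r ∉ lowerRules P lam k) {a : α}
    (ha : a ∈ r.objBodyAtoms ∪ r.headAtoms) : k < lam a := by
  by_cases hro : r.objective
  · obtain ⟨c, hc, hck⟩ := Set.not_subset.mp fun h => hrk ⟨hr, hro, h⟩
    have hsubj := ERule.subjBodyAtoms_eq_empty hro
    have hlevel := hlam.level_eq r hr
      a ⟨ha.elim (fun h => ERule.objBodyAtoms_subset_atoms h) Or.inl, by simp [hsubj]⟩
      c ⟨hc, by simp [hsubj]⟩
    have hck : k < lam c := not_le.mp hck
    omega
  · obtain ⟨φ, hφ, hnobj⟩ := by simpa [ERule.objective] using hro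
    have hs := (hwf r hr φ hφ).resolve_left hnobj
    obtain ⟨b, hb⟩ := hcl r hr φ hφ hs
    have hdep := hlam.lt_of_dep a b ⟨r, hr, ha.symm, φ, hφ, hs, hb⟩
    have := hk b ⟨r, hr, φ, hφ, hs, hb⟩
    omega

theorem IsStratification.isSplitting_level (hlam : IsStratification P lam) (hwf : progWF P)
    (hcl : SubjLitsHaveAtoms P) (hk : ∀ b ∈ subjAtoms P, k ≤ lam b) :
    isSplitting P {a | lam a ≤ k} (lowerRules P lam k) (P \ lowerRules P lam k) := by
  refine ⟨Set.inter_sdiff_self _ _, Set.union_sdiff_cancel fun _ hr => hr.1,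
    fun _ hr => hr.2.2, ?_⟩
  rintro r ⟨hr, hrB⟩
  refine Set.eq_empty_iff_forall_notMem.mpr fun a ⟨ha, hak⟩ => ?_
  exact absurd hak (not_le.mpr (hlam.lt_of_not_lower hwf hcl hk hr hrB ha))

end LevelSplit

def WorldViewsAgree (S S' : EProgram α → BView α → Prop) (P : EProgram α) : Prop :=
  ((¬ ∃ W, S P W) ∧ (¬ ∃ W, S' P W)) ∨
    (∃ W, S P W ∧ S' P W ∧ (∀ W', S P W' → W' = W) ∧ ∀ W', S' P W' → W' = W)

section Semantics

variable {S S' : EProgram α → BView α → Prop} {P B Tp : EProgram α} {U : Set α}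

theorem splittingSet_of_isSplitting (h : isSplitting P U B Tp) : splittingSet P U := by
  obtain ⟨-, hP, hB, hTp⟩ := h
  rintro r hr
  rw [← hP] at hr
  exact hr.imp (hB r) (hTp r)

theorem worldViewsAgree_of_objective (hS : supraASP S) (hS' : supraASP S') (hwf : progWF P)
    (hobj : progObjective P) : WorldViewsAgree S S' P := by
  rcases hS P hwf hobj with ⟨hne, h⟩ | ⟨he, h⟩ <;>
    rcases hS' P hwf hobj with ⟨hne', h'⟩ | ⟨he', h'⟩
  · exact Or.inr ⟨_, (h _).mpr rfl, (h' _).mpr rfl, fun W hW => (h W).mp hW,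
      fun W hW => (h' W).mp hW⟩
  · exact absurd he' hne
  · exact absurd he hne'
  · exact Or.inl ⟨fun ⟨W, hW⟩ => h W hW, fun ⟨W, hW⟩ => h' W hW⟩

theorem worldView_iff_of_isSplitting (hS1 : satisfiesSplitting S) (hS2 : supraASP S)
    (hwf : progWF P) (hsplit : isSplitting P U B Tp) (hB : progObjective B) (W : BView α) :
    S P W ↔ SMset (progTheory B) ≠ ∅ ∧ ∃ Wt, S (EU Tp (ofSets (SMset (progTheory B))) U) Wt ∧
      W = vjoin (ofSets (SMset (progTheory B))) Wt := by
  have hwfB : progWF B := fun r hr => hwf r (hsplit.2.1 ▸ Or.inl hr)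
  rw [hS1 P hwf U (splittingSet_of_isSplitting hsplit) B Tp hsplit W]
  rcases hS2 B hwfB hB with ⟨hne, hSB⟩ | ⟨he, hSB⟩
  · simp only [hSB, exists_and_left, exists_eq_left, ne_eq, hne, not_false_eq_true, true_and]
  · simp only [hSB, false_and, exists_false, he, ne_eq, not_true_eq_false]

theorem WorldViewsAgree.of_iff {Q : EProgram α} {c : Prop} {f : BView α → BView α}
    (h : ∀ W, S P W ↔ c ∧ ∃ Wt, S Q Wt ∧ W = f Wt)
    (h' : ∀ W, S' P W ↔ c ∧ ∃ Wt, S' Q Wt ∧ W = f Wt)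
    (hQ : WorldViewsAgree S S' Q) : WorldViewsAgree S S' P := by
  by_cases hc : c
  · simp only [hc, true_and] at h h'
    rcases hQ with ⟨hA, hA'⟩ | ⟨Wt, hWt, hWt', hu, hu'⟩
    · refine Or.inl ⟨fun ⟨W, hW⟩ => ?_, fun ⟨W, hW⟩ => ?_⟩
      · obtain ⟨Wt, hWt, -⟩ := (h W).mp hW; exact hA ⟨Wt, hWt⟩
      · obtain ⟨Wt, hWt, -⟩ := (h' W).mp hW; exact hA' ⟨Wt, hWt⟩
    · refine Or.inr ⟨f Wt, (h _).mpr ⟨Wt, hWt, rfl⟩, (h' _).mpr ⟨Wt, hWt', rfl⟩, ?_, ?_⟩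
      · intro W hW
        obtain ⟨Wt', hWt', rfl⟩ := (h W).mp hW
        rw [hu Wt' hWt']
      · intro W hW
        obtain ⟨Wt', hWt', rfl⟩ := (h' W).mp hW
        rw [hu' Wt' hWt']
  · exact Or.inl ⟨fun ⟨W, hW⟩ => hc ((h W).mp hW).1, fun ⟨W, hW⟩ => hc ((h' W).mp hW).1⟩

theorem WorldViewsAgree.of_isSplitting (hS1 : satisfiesSplitting S) (hS2 : supraASP S)
    (hS1' : satisfiesSplitting S') (hS2' : supraASP S') (hwf : progWF P)
    (hsplit : isSplitting P U B Tp) (hB : progObjective B)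
    (hQ : WorldViewsAgree S S' (EU Tp (ofSets (SMset (progTheory B))) U)) :
    WorldViewsAgree S S' P :=
  .of_iff (worldView_iff_of_isSplitting hS1 hS2 hwf hsplit hB)
    (worldView_iff_of_isSplitting hS1' hS2' hwf hsplit hB) hQ

end Semantics

theorem exists_mem_subjAtoms {P : EProgram α} (hwf : progWF P) (hcl : SubjLitsHaveAtoms P)
    (hobj : ¬ progObjective P) : (subjAtoms P).Nonempty := by
  obtain ⟨r, hr, φ, hφ, hnobj⟩ : ∃ r ∈ P, ∃ φ ∈ r.body, ¬ isObjLit φ := by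
    simpa [progObjective, ERule.objective] using hobj
  have hs := (hwf r hr φ hφ).resolve_left hnobj
  obtain ⟨b, hb⟩ := hcl r hr φ hφ hs
  exact ⟨b, r, hr, φ, hφ, hs, hb⟩

theorem worldViewsAgree_of_isStratification [Finite α] {S S' : EProgram α → BView α → Prop}
    (hS1 : satisfiesSplitting S) (hS2 : supraASP S)
    (hS1' : satisfiesSplitting S') (hS2' : supraASP S') {P : EProgram α} {lam : α → ℕ}
    (hwf : progWF P) (hcl : SubjLitsHaveAtoms P) (hlam : IsStratification P lam) :
    WorldViewsAgree S S' P := by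
  induction hn : (subjAtoms P).ncard using Nat.strong_induction_on generalizing P with
  | _ n ih =>
    by_cases hobj : progObjective P
    · exact worldViewsAgree_of_objective hS2 hS2' hwf hobj
    obtain ⟨b, hb, hbmin⟩ := Set.exists_min_image _ lam (Set.toFinite _)
      (exists_mem_subjAtoms hwf hcl hobj)
    set B := lowerRules P lam (lam b)
    set U : Set α := {a | lam a ≤ lam b}
    have hTp : P \ B ⊆ P := Set.sdiff_subset
    have hwfTp : progWF (P \ B) := fun r hr => hwf r (hTp hr)
    refine .of_isSplitting hS1 hS2 hS1' hS2' hwf (hlam.isSplitting_level hwf hcl hbmin)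
      (fun r hr => hr.2.1) ?_
    have hlt : (subjAtoms (EU (P \ B) (ofSets (SMset (progTheory B))) U)).ncard < n := by
      rw [← hn]
      refine Set.ncard_lt_ncard ((Set.ssubset_iff_of_subset ?_).mpr ⟨b, hb, ?_⟩)
      · exact (subjAtoms_EU_subset hwfTp).trans (Set.sdiff_subset.trans (subjAtoms_mono hTp))
      · exact fun h => (subjAtoms_EU_subset hwfTp h).2 (le_refl (lam b))
    exact ih _ hlt (EU_wf hwfTp) (EU_subjLitsHaveAtoms hwfTp) (isStratification_EU hlam hwf hTp)
      rfl

theorem stmt10_general {α : Type} [Finite α] (S S' : EProgram α → BView α → Prop)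
    (hS1 : satisfiesSplitting S) (hS2 : supraASP S)
    (hS1' : satisfiesSplitting S') (hS2' : supraASP S')
    (P : EProgram α) (hwf : progWF P) (hstrat : stratified P) :
    ((¬ ∃ W, S P W) ∧ (¬ ∃ W, S' P W)) ∨
      (∃ W, S P W ∧ S' P W ∧ (∀ W', S P W' → W' = W) ∧ ∀ W', S' P W' → W' = W) := by
  obtain ⟨lam, hlevel, hdep⟩ := hstrat
  have hlam : IsStratification P lam := ⟨hlevel, hdep⟩
  -- Splitting at `U = ∅` first evaluates the atomless subjective literals such as `K⊤`.
  have hsplit : isSplitting P ∅ ∅ P :=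
    ⟨Set.empty_inter P, Set.empty_union P, fun _ hr => absurd hr (Set.notMem_empty _),
      fun _ _ => Set.inter_empty _⟩
  refine WorldViewsAgree.of_isSplitting hS1 hS2 hS1' hS2' hwf hsplit
    (fun _ hr => absurd hr (Set.notMem_empty _)) ?_
  exact worldViewsAgree_of_isStratification hS1 hS2 hS1' hS2' (EU_wf hwf)
    (EU_subjLitsHaveAtoms hwf) (isStratification_EU hlam hwf subset_rfl)

/-- any two semantics satisfying epistemic splitting and supra-ASP
agree on epistemically stratified programs, which have at most one world view. -/
theorem stmt10 {α : Type} [Finite α] (S S' : EProgram α → BView α → Prop)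
    (hTot : ∀ P W, S P W → totalView W) (hTot' : ∀ P W, S' P W → totalView W)
    (hS1 : satisfiesSplitting S) (hS2 : supraASP S)
    (hS1' : satisfiesSplitting S') (hS2' : supraASP S')
    (P : EProgram α) (hwf : progWF P) (hstrat : stratified P) :
    ((¬ ∃ W, S P W) ∧ (¬ ∃ W, S' P W)) ∨
      (∃ W, S P W ∧ S' P W ∧ (∀ W', S P W' → W' = W) ∧ ∀ W', S' P W' → W' = W) :=
  stmt10_general S S' hS1 hS2 hS1' hS2' P hwf hstrat

end Epist
end

section
/- For any theory Γ and any total belief view W, W is a FAEEL-world view of Γ if and only if W is a FAEEL-world view of the negatively subjective reduct Γ^{W̲}. -/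
namespace Epist

attribute [local instance] Classical.propDecidable

variable {α : Type}

end Epist

/-!
The truth of `¬Kφ` depends only on the total view `W'ᵗ`: by persistence, `W' ⊨ Kφ`
implies `W'ᵗ ⊨ Kφ`, so `⟨W', H, T⟩ ⊨ ¬Kφ` iff `W'ᵗ ⊭ Kφ`. Hence replacing `¬Kφ` by its truth
value in `W` preserves satisfaction in every belief interpretation whose view `W'` has
`W'ᵗ = W`. When `W` is total, every `W'` with `W' ⪯ W` is of that kind, so `Γ` and `Γ^W̲` have
the same belief models wherever the equilibrium condition for `⟨W, T⟩` looks.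
-/

namespace Epist

variable {α : Type}

theorem tview_tview (W : BView α) : tview (tview W) = tview W := by
  simp [tview, Set.image_image]

theorem sat_top (W : BView α) (H T : Set α) : sat EForm.top W H T :=
  ⟨id, id⟩

theorem epSat_K_iff (W : BView α) (φ : EForm α) : epSat W (.K φ) ↔ epSat W φ := by
  constructor
  · rintro h i hi
    exact h i hi i hi
  · exact fun h _ _ => h

theorem sat_tview_of_sat {W : BView α} (hW : ∀ i ∈ W, i.1 ⊆ i.2) :
    ∀ (φ : EForm α) {H T : Set α}, H ⊆ T → sat φ W H T → sat φ (tview W) T T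
  | .bot, _, _, _, h => h
  | .atom _, _, _, hHT, h => hHT h
  | .and φ ψ, _, _, hHT, h => ⟨sat_tview_of_sat hW φ hHT h.1, sat_tview_of_sat hW ψ hHT h.2⟩
  | .or φ ψ, _, _, hHT, h => h.imp (sat_tview_of_sat hW φ hHT) (sat_tview_of_sat hW ψ hHT)
  | .imp _ _, _, _, _, h => ⟨h.2, by rw [tview_tview]; exact h.2⟩
  | .K φ, _, _, _, h => by
      rintro _ ⟨j, hj, rfl⟩
      exact sat_tview_of_sat hW φ (hW j hj) (h j hj)

theorem sat_neg_K_iff {W : BView α} (hW : ∀ i ∈ W, i.1 ⊆ i.2) (φ : EForm α) (H T : Set α) :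
    sat (EForm.K φ).neg W H T ↔ ¬ epSat (tview W) φ := by
  have persist : sat (.K φ) W H T → sat (.K φ) (tview W) T T := fun h => by
    rintro _ ⟨j, hj, rfl⟩
    exact sat_tview_of_sat hW φ (hW j hj) (h j hj)
  exact ⟨fun h hφ => h.2 hφ, fun h => ⟨fun hK => h (persist hK), h⟩⟩

theorem viewLE_refl (W : BView α) : viewLE W W :=
  ⟨fun i hi => ⟨i.1, hi, subset_rfl⟩, fun i hi => ⟨i.1, hi, subset_rfl⟩⟩

theorem tview_eq_of_viewLE {W' W : BView α} (hW : totalView W) (h : viewLE W' W) :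
    tview W' = W := by
  ext ⟨H, T⟩
  constructor
  · rintro ⟨i, hi, hiHT⟩
    obtain ⟨H₁, hH₁, -⟩ := h.2 i hi
    obtain rfl : H₁ = i.2 := hW _ hH₁
    simp only [Prod.mk.injEq] at hiHT
    rwa [← hiHT.1, ← hiHT.2]
  · intro hi
    obtain ⟨H₁, hH₁, -⟩ := h.1 _ hi
    obtain rfl : H = T := hW _ hi
    exact ⟨_, hH₁, rfl⟩

theorem negReduct_imp {W : BView α} {φ ψ : EForm α} (h : ¬ ∃ χ, φ = .K χ ∧ ψ = .bot) :
    negReduct W (.imp φ ψ) = .imp (negReduct W φ) (negReduct W ψ) := by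
  cases φ <;> cases ψ <;> first | rfl | exact absurd ⟨_, rfl, rfl⟩ h

open Classical in
theorem sat_negReduct_iff {W' W : BView α} (hW' : ∀ i ∈ W', i.1 ⊆ i.2) (htv : tview W' = W)
    (φ : EForm α) (H T : Set α) : sat (negReduct W φ) W' H T ↔ sat φ W' H T := by
  induction φ generalizing W' H T with
  | bot | atom _ => rfl
  | and φ ψ ihφ ihψ | or φ ψ ihφ ihψ =>
      simp only [negReduct, sat, ihφ hW' htv, ihψ hW' htv]
  | K φ ih => simp only [negReduct, sat, ih hW' htv]
  | imp φ ψ ihφ ihψ =>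
      by_cases hnegK : ∃ χ, φ = .K χ ∧ ψ = .bot
      · obtain ⟨χ, rfl, rfl⟩ := hnegK
        rw [← EForm.neg, sat_neg_K_iff hW', htv, ← epSat_K_iff]
        change sat (if epSat W (.K χ) then .bot else EForm.top) W' H T ↔ _
        split_ifs with hK
        · exact iff_of_false id (not_not.mpr hK)
        · exact iff_of_true (sat_top W' H T) hK
      · have hW : ∀ i ∈ W, i.1 ⊆ i.2 := by
          rw [← htv]
          rintro _ ⟨j, -, rfl⟩
          exact subset_rfl
        have htvW : tview W = W := by rw [← htv, tview_tview]
        rw [negReduct_imp hnegK]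
        simp only [sat, htv, ihφ hW' htv, ihψ hW' htv, ihφ hW htvW, ihψ hW htvW]

theorem beliefModel_negReduct_iff {W' W : BView α} (htv : tview W' = W) (Γ : Set (EForm α))
    (H T : Set α) : beliefModel W' H T (negReduct W '' Γ) ↔ beliefModel W' H T Γ := by
  refine and_congr_right fun hW' => and_congr_right fun _ => ?_
  simp only [Set.forall_mem_image, epSat, sat_negReduct_iff hW'.2 htv]

theorem eqBeliefModel_negReduct_iff {W : BView α} (hW : totalView W) (Γ : Set (EForm α))
    (T : Set α) : eqBeliefModel (negReduct W '' Γ) W T ↔ eqBeliefModel Γ W T := by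
  have hbelow : ∀ {W' H' T'}, biLT W' H' T' W T T → tview W' = W := fun h =>
    tview_eq_of_viewLE hW h.1.2
  refine and_congr_right fun _ => and_congr ?_ ?_
  · exact beliefModel_negReduct_iff (tview_eq_of_viewLE hW (viewLE_refl W)) Γ T T
  · refine forall₃_congr fun W' H' T' => ?_
    refine imp_not_comm.trans (Iff.trans ?_ imp_not_comm)
    exact imp_congr_right fun hlt => not_congr (beliefModel_negReduct_iff (hbelow hlt) Γ H' T')

/-- W is a FAEEL-world view of Γ iff W is a FAEEL-world view of the
negatively subjective reduct Γ^{W̲}. -/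
theorem stmt12 {α : Type} (Γ : Set (EForm α)) (W : BView α) (hW : totalView W) :
    FAEEL Γ W ↔ FAEEL (negReduct W '' Γ) W := by
  simp only [FAEEL, eqBeliefModel_negReduct_iff hW]

end Epist
end

section
/- Every FAEEL-world view of any theory Γ is an EEL-world view of Γ, and every FEEL-world view of Γ is an EEL-world view of Γ. -/
namespace Epist

attribute [local instance] Classical.propDecidable

variable {α : Type}

end Epist
/-
Every belief view lies `⪯`-below its total version, strictly so when it has a non-total member.
A simple epistemic model `W'` witnessing that `W` is not an EEL-world view has `(W')ᵗ = W` and a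
non-total member `⟨H, T⟩`. So `W'` is an epistemic model strictly below `W`, against
FEEL-minimality, and `⟨W', H, T⟩` is a belief model strictly below `⟨W, T⟩`, against `⟨W, T⟩`
being an equilibrium belief model, as FAEEL requires for `T ∈ W`.
-/
namespace Epist

variable {α : Type}

theorem totalView_tview (W : BView α) : totalView (tview W) := by
  rintro _ ⟨i, -, rfl⟩
  rfl

theorem viewLE_tview {W : BView α} (hW : ∀ i ∈ W, i.1 ⊆ i.2) : viewLE W (tview W) := by
  refine ⟨?_, fun i hi => ⟨i.2, ⟨i, hi, rfl⟩, hW i hi⟩⟩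
  rintro _ ⟨i, hi, rfl⟩
  exact ⟨i.1, hi, hW i hi⟩

theorem viewLT_tview {W : BView α} (hW : ∀ i ∈ W, i.1 ⊆ i.2) {i : Set α × Set α} (hi : i ∈ W)
    (hsub : i.1 ⊂ i.2) : viewLT W (tview W) := by
  refine ⟨viewLE_tview hW, fun h => hsub.ne ?_⟩
  exact totalView_tview W i (h ▸ hi)

theorem biLT_tview {W : BView α} (hW : ∀ i ∈ W, i.1 ⊆ i.2) {H T : Set α} (hsub : H ⊂ T) :
    biLT W H T (tview W) T T :=
  ⟨⟨⟨rfl, hsub.subset⟩, viewLE_tview hW⟩, fun h => hsub.ne (congrArg (·.2.1) h)⟩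

theorem FAEEL.epModel {Γ : Set (EForm α)} {W : BView α} (h : FAEEL Γ W) : epModel W Γ := by
  obtain ⟨hW, -, hEq⟩ := h
  refine ⟨hW, ?_⟩
  obtain ⟨i, hi⟩ := hW.1
  rw [hEq] at hi
  obtain ⟨T, hT, -⟩ := hi
  exact hT.2.1.2.2.2

theorem FAEEL.EEL {Γ : Set (EForm α)} {W : BView α} (h : FAEEL Γ W) : EEL Γ W := by
  refine ⟨h.2.1, h.epModel, ?_⟩
  rintro ⟨W', -, ⟨hW', hΓ⟩, rfl, i, hi, hsub⟩
  have hT : (i.2, i.2) ∈ tview W' := ⟨i, hi, rfl⟩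
  rw [h.2.2] at hT
  obtain ⟨T, hT, hTi⟩ := hT
  obtain rfl : T = i.2 := congrArg Prod.fst hTi
  exact hT.2.2 W' i.1 i.2 ⟨hW', hsub.subset, fun φ hφ => hΓ φ hφ i hi, hΓ⟩ (biLT_tview hW'.2 hsub)

theorem FEEL.EEL {Γ : Set (EForm α)} {W : BView α} (h : FEEL Γ W) : EEL Γ W := by
  obtain ⟨hTot, hW, hMin⟩ := h
  refine ⟨hTot, hW, ?_⟩
  rintro ⟨W', -, hW', rfl, i, hi, hsub⟩
  exact hMin W' hW' (viewLT_tview hW'.1.2 hi hsub)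

/-- every FAEEL-world view and every FEEL-world view of Γ is an
EEL-world view of Γ. -/
theorem stmt15 {α : Type} (Γ : Set (EForm α)) (W : BView α) :
    (FAEEL Γ W → EEL Γ W) ∧ (FEEL Γ W → EEL Γ W) :=
  ⟨FAEEL.EEL, FEEL.EEL⟩

end Epist
end
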